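/- arXiv:1605.08767 — 2 statements merged into one kernel-verified Lean document; each statement's English description precedes it below -/
import Mathlib

section
/- There exists c₀ > 0 such that for every c ∈ [0, c₀] and every z ∈ 𝓔, the unique solution w_c(z) of 1 + z w + w² + c w⁴ = 0 with Im w > 0 and |w| ≤ 5 satisfies the stability bound |z + w_c(z)| > 1/6. -/
/-- The spectral domain `𝓔 = {z = E + iη : |E| < 3, 0 < η ≤ 3}`. -/
def specDomainE : Set ℂ := {z : ℂ | |z.re| < 3 ∧ 0 < z.im ∧ z.im ≤ 3}

/-!
The equation gives `w (z + w) = -(1 + c w⁴)`, so `|w| |z + w| = |1 + c w⁴| ≥ 1 - c |w|⁴`.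
With `|w| ≤ 5` and `c ≤ 1/6250` this yields `5 |z + w| ≥ 1 - 625 c ≥ 9/10 > 5/6`.
-/

theorem norm_mul_norm_add_eq_of_quartic {c : ℝ} {z w : ℂ}
    (h : 1 + z * w + w ^ 2 + (c : ℂ) * w ^ 4 = 0) :
    ‖w‖ * ‖z + w‖ = ‖1 + (c : ℂ) * w ^ 4‖ := by
  rw [← norm_mul, ← norm_neg]
  congr 1
  linear_combination -h

theorem one_sub_mul_pow_le_mul_norm_add_of_quartic {c R : ℝ} {z w : ℂ} (hc : 0 ≤ c)
    (hwR : ‖w‖ ≤ R) (h : 1 + z * w + w ^ 2 + (c : ℂ) * w ^ 4 = 0) :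
    1 - c * R ^ 4 ≤ R * ‖z + w‖ :=
  calc 1 - c * R ^ 4 ≤ 1 - c * ‖w‖ ^ 4 := by gcongr
    _ = ‖(1 : ℂ)‖ - ‖-((c : ℂ) * w ^ 4)‖ := by
      rw [norm_neg, norm_mul, norm_pow, Complex.norm_of_nonneg hc, norm_one]
    _ ≤ ‖1 + (c : ℂ) * w ^ 4‖ := by
      simpa only [sub_neg_eq_add] using norm_sub_norm_le (1 : ℂ) (-((c : ℂ) * w ^ 4))
    _ = ‖w‖ * ‖z + w‖ := (norm_mul_norm_add_eq_of_quartic h).symm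
    _ ≤ R * ‖z + w‖ := by gcongr

/-- Remark 4.3 of the paper: the stability bound `|z + w_c(z)| > 1/6` for
the solution `w_c(z)` of `1 + z w + w² + c w⁴ = 0` with `Im w > 0` and `|w| ≤ 5`, on `𝓔`. -/
theorem quartic_solution_stability :
    ∃ c₀ : ℝ, 0 < c₀ ∧ ∀ c : ℝ, 0 ≤ c → c ≤ c₀ → ∀ z ∈ specDomainE,
      ∀ w : ℂ, 0 < w.im → ‖w‖ ≤ 5 →
        1 + z * w + w ^ 2 + (c : ℂ) * w ^ 4 = 0 →
        1 / 6 < ‖z + w‖ := by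
  refine ⟨1 / 6250, by norm_num, fun c hc0 hc1 z _ w _ hw5 h => ?_⟩
  have := one_sub_mul_pow_le_mul_norm_add_of_quartic hc0 hw5 h
  linarith
end

section
/- Let H be a real symmetric N×N matrix with eigenvalues λ₁, …, λ_N and an orthonormal basis of eigenvectors u₁, …, u_N satisfying ‖u_α‖_∞ ≤ K N^{−1/2} for all α, for some K ≥ 1. Let G(z) = (H − z)^{−1} and m(z) = N^{−1} Tr G(z), z = E + iη with η > 0. Then for all indices i, k ∈ {1, …, N}: (i) (1/N) Σ_{j=1}^N |G_{ij}(z)| · |G_{jk}(z)| ≤ K² Im m(z)/(Nη); in particular (1/N) Σ_{j=1}^N |G_{ij}(z)|² ≤ K² Im m(z)/(Nη); and (ii) (1/N) Σ_{j=1}^N |G_{ij}(z)| ≤ K (Im m(z)/(Nη))^{1/2}. -/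
/-!
Expanding the resolvent in the eigenbasis gives `G_ij = ∑_α u_α(i) u_α(j) / (λ_α - z)`, so by
Parseval `∑_j |G_ij|² = ∑_α u_α(i)² / |λ_α - z|² = Im G_ii / η` (the Ward identity), and
`G` is symmetric. Delocalization `u_α(i)² ≤ K² / N` turns `Im G_ii = ∑_α u_α(i)² Im (λ_α - z)⁻¹`
into `Im G_ii ≤ K² Im m`. The three estimates follow from this row bound: (i) by AM-GM together
with `G_jk = G_kj`, (ii) directly, (iii) by Cauchy-Schwarz.
-/

noncomputable section

/-- The Green function (resolvent) `G(z) = (H - z)⁻¹` of a real matrix. -/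
def greenFn {N : ℕ} (A : Matrix (Fin N) (Fin N) ℝ) (z : ℂ) : Matrix (Fin N) (Fin N) ℂ :=
  (A.map (fun x => (x : ℂ)) - z • (1 : Matrix (Fin N) (Fin N) ℂ))⁻¹

/-- The normalized trace `m(z) = N⁻¹ Tr G(z)` of the Green function. -/
def mTr {N : ℕ} (A : Matrix (Fin N) (Fin N) ℝ) (z : ℂ) : ℂ :=
  (greenFn A z).trace / (N : ℂ)

open Finset Matrix

variable {R 𝕜 ι : Type*}

theorem Finset.sum_mul_le_of_sum_sq_le (s : Finset ι) {f g : ι → ℝ} {B : ℝ}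
    (hf : ∑ i ∈ s, f i ^ 2 ≤ B) (hg : ∑ i ∈ s, g i ^ 2 ≤ B) : ∑ i ∈ s, f i * g i ≤ B := by
  have hamgm : 2 * ∑ i ∈ s, f i * g i ≤ ∑ i ∈ s, f i ^ 2 + ∑ i ∈ s, g i ^ 2 := by
    rw [mul_sum, ← sum_add_distrib]
    exact sum_le_sum fun i _ => by linarith [two_mul_le_add_sq (f i) (g i)]
  linarith

theorem Finset.sum_div_card_le_sqrt_sum_sq_div_card (s : Finset ι) (f : ι → ℝ) :
    (∑ i ∈ s, f i) / #s ≤ √((∑ i ∈ s, f i ^ 2) / #s) :=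
  Real.le_sqrt_of_sq_le (sum_div_card_sq_le_sum_sq_div_card)

theorem Complex.ofReal_ne_of_im_ne_zero {z : ℂ} (hz : z.im ≠ 0) (x : ℝ) : (x : ℂ) ≠ z :=
  fun h => hz (by simp [← h])

theorem Complex.inv_ofReal_sub_im (x : ℝ) (z : ℂ) :
    ((x : ℂ) - z)⁻¹.im = z.im / ‖(x : ℂ) - z‖ ^ 2 := by
  rw [inv_im, Complex.sq_norm]
  simp

section

variable [Fintype ι] [DecidableEq ι]

theorem Matrix.inv_eq_transpose_mul_diagonal_mul [Field 𝕜] {B V : Matrix ι ι 𝕜} {μ : ι → 𝕜}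
    (hV : V * Vᵀ = 1) (hBV : B * Vᵀ = Vᵀ * diagonal μ) (hμ : ∀ α, μ α ≠ 0) :
    B⁻¹ = Vᵀ * diagonal μ⁻¹ * V := by
  refine inv_eq_right_inv ?_
  calc B * (Vᵀ * diagonal μ⁻¹ * V)
      = Vᵀ * (diagonal μ * diagonal μ⁻¹) * V := by simp only [← Matrix.mul_assoc, hBV]
    _ = 1 := by simp [diagonal_mul_diagonal, hμ, mul_eq_one_comm.mp hV]

theorem Matrix.trace_transpose_mul_diagonal_mul [CommSemiring R] {V : Matrix ι ι R}
    (hV : V * Vᵀ = 1) (d : ι → R) : trace (Vᵀ * diagonal d * V) = ∑ i, d i := by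
  rw [trace_mul_cycle, hV, Matrix.one_mul, trace_diagonal]

theorem Matrix.mul_transpose_eq_one_of_orthonormal_rows [CommSemiring R] {v : ι → ι → R}
    (horth : ∀ α β, ∑ i, v α i * v β i = if α = β then 1 else 0) :
    of v * (of v)ᵀ = 1 := by
  ext α β
  simp [mul_apply, one_apply, horth]

theorem Matrix.mul_transpose_eq_transpose_mul_diagonal [CommSemiring R] {A : Matrix ι ι R}
    {v : ι → ι → R} {μ : ι → R} (heig : ∀ α, A *ᵥ v α = μ α • v α) :
    A * (of v)ᵀ = (of v)ᵀ * diagonal μ := by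
  ext i α
  rw [mul_diagonal]
  simpa [mul_apply, mulVec, dotProduct, mul_comm] using congrFun (heig α) i

theorem sum_norm_sq_sum_mul_of_orthonormal [RCLike 𝕜] (u : ι → ι → ℝ)
    (horth : ∀ α β, ∑ i, u α i * u β i = if α = β then 1 else 0) (c : ι → 𝕜) :
    ∑ j, ‖∑ α, c α * u α j‖ ^ 2 = ∑ α, ‖c α‖ ^ 2 := by
  apply RCLike.ofReal_injective (K := 𝕜)
  push_cast
  simp_rw [← RCLike.mul_conj, map_sum, map_mul, RCLike.conj_ofReal, sum_mul_sum]
  calc ∑ j, ∑ α, ∑ β, c α * (u α j : 𝕜) * ((starRingEnd 𝕜) (c β) * u β j)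
      = ∑ α, ∑ β, c α * (starRingEnd 𝕜) (c β) * ((∑ j, u α j * u β j : ℝ) : 𝕜) := by
        rw [sum_comm]
        refine sum_congr rfl fun α _ => ?_
        rw [sum_comm]
        simp_rw [RCLike.ofReal_sum, RCLike.ofReal_mul, mul_sum]
        exact sum_congr rfl fun β _ => sum_congr rfl fun j _ => by ring
    _ = ∑ α, c α * (starRingEnd 𝕜) (c α) := by simp [horth]

end

namespace greenFn

variable {N : ℕ} {A : Matrix (Fin N) (Fin N) ℝ} {lam : Fin N → ℝ} {u : Fin N → Fin N → ℝ} {z : ℂ}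

theorem map_ofReal_mul_transpose_eq_one
    (horth : ∀ α β, ∑ i, u α i * u β i = if α = β then 1 else 0) :
    (of u).map (↑) * ((of u).map (↑))ᵀ = (1 : Matrix (Fin N) (Fin N) ℂ) := by
  have h := congrArg (Matrix.map · Complex.ofRealHom)
    (mul_transpose_eq_one_of_orthonormal_rows horth)
  rw [Matrix.map_mul, transpose_map, Matrix.map_one _ (map_zero _) (map_one _)] at h
  exact h

theorem eq_transpose_mul_diagonal_mul
    (horth : ∀ α β, ∑ i, u α i * u β i = if α = β then 1 else 0)
    (heig : ∀ α, A *ᵥ u α = lam α • u α) (hz : ∀ α, (lam α : ℂ) ≠ z) :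
    greenFn A z =
      ((of u).map (↑))ᵀ * diagonal (fun α => ((lam α : ℂ) - z)⁻¹) * (of u).map (↑) := by
  refine inv_eq_transpose_mul_diagonal_mul (map_ofReal_mul_transpose_eq_one horth) ?_
    (fun α => sub_ne_zero.2 (hz α))
  have h := congrArg (Matrix.map · Complex.ofRealHom)
    (mul_transpose_eq_transpose_mul_diagonal heig)
  rw [Matrix.map_mul, Matrix.map_mul, transpose_map, diagonal_map (map_zero _)] at h
  rw [sub_mul, ← diagonal_sub, ← smul_one_eq_diagonal, mul_sub, smul_mul, Matrix.one_mul,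
    Matrix.mul_smul, Matrix.mul_one]
  exact congrArg (· - _) h

theorem apply_eq_sum
    (horth : ∀ α β, ∑ i, u α i * u β i = if α = β then 1 else 0)
    (heig : ∀ α, A *ᵥ u α = lam α • u α) (hz : ∀ α, (lam α : ℂ) ≠ z) (i j : Fin N) :
    greenFn A z i j = ∑ α, u α i * ((lam α : ℂ) - z)⁻¹ * u α j := by
  rw [eq_transpose_mul_diagonal_mul horth heig hz, mul_apply]
  simp [mul_diagonal]

theorem trace_eq_sum
    (horth : ∀ α β, ∑ i, u α i * u β i = if α = β then 1 else 0)
    (heig : ∀ α, A *ᵥ u α = lam α • u α) (hz : ∀ α, (lam α : ℂ) ≠ z) :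
    (greenFn A z).trace = ∑ α, ((lam α : ℂ) - z)⁻¹ := by
  rw [eq_transpose_mul_diagonal_mul horth heig hz,
    trace_transpose_mul_diagonal_mul (map_ofReal_mul_transpose_eq_one horth)]

theorem apply_comm
    (horth : ∀ α β, ∑ i, u α i * u β i = if α = β then 1 else 0)
    (heig : ∀ α, A *ᵥ u α = lam α • u α) (hz : ∀ α, (lam α : ℂ) ≠ z) (i j : Fin N) :
    greenFn A z i j = greenFn A z j i := by
  simp only [apply_eq_sum horth heig hz]
  exact sum_congr rfl fun α _ => by ring

theorem sum_norm_sq_eq_im_div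
    (horth : ∀ α β, ∑ i, u α i * u β i = if α = β then 1 else 0)
    (heig : ∀ α, A *ᵥ u α = lam α • u α) (hz : z.im ≠ 0) (i : Fin N) :
    ∑ j, ‖greenFn A z i j‖ ^ 2 = (greenFn A z i i).im / z.im := by
  have hspec α := Complex.ofReal_ne_of_im_ne_zero hz (lam α)
  simp only [apply_eq_sum horth heig hspec]
  refine (sum_norm_sq_sum_mul_of_orthonormal u horth _).trans ?_
  rw [Complex.im_sum, sum_div]
  refine sum_congr rfl fun α _ => ?_
  rw [mul_right_comm, ← Complex.ofReal_mul, Complex.im_ofReal_mul, Complex.inv_ofReal_sub_im,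
    norm_mul, norm_inv, Complex.norm_real, Real.norm_eq_abs, mul_pow, inv_pow, sq_abs]
  field_simp

theorem im_mTr
    (horth : ∀ α β, ∑ i, u α i * u β i = if α = β then 1 else 0)
    (heig : ∀ α, A *ᵥ u α = lam α • u α) (hz : ∀ α, (lam α : ℂ) ≠ z) :
    (mTr A z).im = (∑ α, ((lam α : ℂ) - z)⁻¹.im) / N := by
  rw [mTr, trace_eq_sum horth heig hz, Complex.div_natCast_im, Complex.im_sum]

theorem im_apply_self_le_mul_im_mTr {K : ℝ}
    (horth : ∀ α β, ∑ i, u α i * u β i = if α = β then 1 else 0)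
    (heig : ∀ α, A *ᵥ u α = lam α • u α) (hdeloc : ∀ α i, |u α i| ≤ K / √N) (hz : 0 < z.im)
    (i : Fin N) :
    (greenFn A z i i).im ≤ K ^ 2 * (mTr A z).im := by
  have hspec α := Complex.ofReal_ne_of_im_ne_zero hz.ne' (lam α)
  have hu : ∀ α, u α i ^ 2 ≤ K ^ 2 / N := fun α => by
    simpa [div_pow] using pow_le_pow_left₀ (abs_nonneg _) (hdeloc α i) 2
  have hw : ∀ α, 0 ≤ ((lam α : ℂ) - z)⁻¹.im := fun α => by
    rw [Complex.inv_ofReal_sub_im]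
    positivity
  rw [apply_eq_sum horth heig hspec, Complex.im_sum, im_mTr horth heig hspec]
  calc ∑ α, ((u α i : ℂ) * ((lam α : ℂ) - z)⁻¹ * u α i).im
      = ∑ α, u α i ^ 2 * ((lam α : ℂ) - z)⁻¹.im := by
        refine sum_congr rfl fun α _ => ?_
        rw [mul_right_comm, ← Complex.ofReal_mul, Complex.im_ofReal_mul, sq]
    _ ≤ ∑ α, K ^ 2 / N * ((lam α : ℂ) - z)⁻¹.im :=
        sum_le_sum fun α _ => mul_le_mul_of_nonneg_right (hu α) (hw α)
    _ = K ^ 2 * ((∑ α, ((lam α : ℂ) - z)⁻¹.im) / N) := by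
        rw [← mul_sum]
        ring

end greenFn

theorem ward_identities_general
    (N : ℕ) (A : Matrix (Fin N) (Fin N) ℝ)
    (lam : Fin N → ℝ) (u : Fin N → Fin N → ℝ) (K : ℝ)
    (horth : ∀ α β : Fin N, (∑ i, u α i * u β i) = if α = β then 1 else 0)
    (heig : ∀ α : Fin N, A.mulVec (u α) = lam α • u α)
    (hdeloc : ∀ α i : Fin N, |u α i| ≤ K / Real.sqrt N)
    (z : ℂ) (hz : 0 < z.im) :
    ∀ i k : Fin N,
      (1 / N : ℝ) * (∑ j, ‖greenFn A z i j‖ * ‖greenFn A z j k‖)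
          ≤ K ^ 2 * (mTr A z).im / (N * z.im) ∧
      (1 / N : ℝ) * (∑ j, ‖greenFn A z i j‖ ^ 2)
          ≤ K ^ 2 * (mTr A z).im / (N * z.im) ∧
      (1 / N : ℝ) * (∑ j, ‖greenFn A z i j‖)
          ≤ K * Real.sqrt ((mTr A z).im / (N * z.im)) := by
  intro i k
  have hspec α := Complex.ofReal_ne_of_im_ne_zero hz.ne' (lam α)
  have hK : 0 ≤ K := by
    have := (abs_nonneg _).trans (hdeloc i i)
    rwa [le_div_iff₀ (Real.sqrt_pos.2 (Nat.cast_pos.2 i.pos)), zero_mul] at this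
  have hrow : ∀ i, ∑ j, ‖greenFn A z i j‖ ^ 2 ≤ K ^ 2 * (mTr A z).im / z.im := fun i => by
    rw [greenFn.sum_norm_sq_eq_im_div horth heig hz.ne']
    gcongr
    exact greenFn.im_apply_self_le_mul_im_mTr horth heig hdeloc hz i
  simp only [one_div_mul_eq_div, mul_comm (N : ℝ), ← div_div]
  refine ⟨?_, by gcongr; exact hrow i, ?_⟩
  · simp only [greenFn.apply_comm horth heig hspec _ k]
    gcongr
    exact sum_mul_le_of_sum_sq_le _ (hrow i) (hrow k)
  · calc (∑ j, ‖greenFn A z i j‖) / N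
        ≤ √((∑ j, ‖greenFn A z i j‖ ^ 2) / N) := by
          simpa using sum_div_card_le_sqrt_sum_sq_div_card univ fun j => ‖greenFn A z i j‖
      _ ≤ √(K ^ 2 * (mTr A z).im / z.im / N) := by gcongr; exact hrow i
      _ = K * √((mTr A z).im / z.im / N) := by
          rw [mul_div_assoc, mul_div_assoc, Real.sqrt_mul (sq_nonneg K), Real.sqrt_sq hK]

/-- quantitative core of Lemma 6.1 in the paper: deterministic Ward-type
identities. If a real symmetric `N×N` matrix has an orthonormal eigenbasis `u` with
`‖u_α‖_∞ ≤ K N^{−1/2}`, then for all `i, k`: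
`N⁻¹ ∑_j |G_{ij}||G_{jk}| ≤ K² Im m/(Nη)`, `N⁻¹ ∑_j |G_{ij}|² ≤ K² Im m/(Nη)` and
`N⁻¹ ∑_j |G_{ij}| ≤ K (Im m/(Nη))^{1/2}`. -/
theorem ward_identities
    (N : ℕ) (hN : 0 < N) (A : Matrix (Fin N) (Fin N) ℝ) (hA : A.IsSymm)
    (lam : Fin N → ℝ) (u : Fin N → Fin N → ℝ) (K : ℝ) (hK : 1 ≤ K)
    (horth : ∀ α β : Fin N, (∑ i, u α i * u β i) = if α = β then 1 else 0)
    (heig : ∀ α : Fin N, A.mulVec (u α) = lam α • u α)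
    (hdeloc : ∀ α i : Fin N, |u α i| ≤ K / Real.sqrt N)
    (z : ℂ) (hz : 0 < z.im) :
    ∀ i k : Fin N,
      (1 / N : ℝ) * (∑ j, ‖greenFn A z i j‖ * ‖greenFn A z j k‖)
          ≤ K ^ 2 * (mTr A z).im / (N * z.im) ∧
      (1 / N : ℝ) * (∑ j, ‖greenFn A z i j‖ ^ 2)
          ≤ K ^ 2 * (mTr A z).im / (N * z.im) ∧
      (1 / N : ℝ) * (∑ j, ‖greenFn A z i j‖)
          ≤ K * Real.sqrt ((mTr A z).im / (N * z.im)) :=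
  ward_identities_general N A lam u K horth heig hdeloc z hz

end
end
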